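/- For any nonempty finite subset D of a finitely generated group Γ and any real λ with 1 < λ ≤ Card(Γ)/Card(D), the exterior boundary satisfies Card(∂'_S D) ≥ (1 − 1/λ)·Card(D)/φ_S(λ·Card(D)). -/

import Mathlib

open Set Filter

/-- The ball of radius `n` in the word metric: elements expressible as a product
of at most `n` elements of `S`. -/
def wordBall {G : Type*} [Group G] (S : Set G) (n : ℕ) : Set G :=
  {x | ∃ l : List G, l.length ≤ n ∧ (∀ s ∈ l, s ∈ S) ∧ l.prod = x}

/-- The growth function `γ_S(n) = Card(B_S(n))`. -/
noncomputable def growth {G : Type*} [Group G] (S : Set G) (n : ℕ) : ℕ :=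
  (wordBall S n).ncard

/-- The word norm `‖x‖_S`. -/
noncomputable def wordNorm {G : Type*} [Group G] (S : Set G) (x : G) : ℕ :=
  sInf {n | x ∈ wordBall S n}

/-- The reverse growth function `φ_S(t) = min {n | γ_S(n) ≥ t}`. -/
noncomputable def phiS {G : Type*} [Group G] (S : Set G) (t : ℝ) : ℕ :=
  sInf {n | t ≤ (growth S n : ℝ)}

/-- The interior boundary `∂_S D`. -/
def intBoundary {G : Type*} [Group G] (S : Set G) (D : Set G) : Set G :=
  {x ∈ D | ∃ s ∈ S, s * x ∉ D}

/-- The exterior boundary `∂'_S D`. -/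
def extBoundary {G : Type*} [Group G] (S : Set G) (D : Set G) : Set G :=
  {x | x ∉ D ∧ ∃ s ∈ S, s * x ∈ D}

/-! Let `n = φ_S(λ|D|)`, so that the ball `B = B_S(n)` has at least `λ|D|` elements. Since
`∑_{y ∈ B} |yD ∩ D| ≤ |D|²`, some `y ∈ B` has `|yD ∩ D| ≤ |D|/λ`, i.e. `|yD \ D| ≥ (1 - 1/λ)|D|`.
On the other hand `(st)D \ D ⊆ s(tD \ D) ∪ (sD \ D)` and `sD \ D ⊆ ∂'_S D` for `s ∈ S`, so
telescoping along a word of length at most `n` for `y` gives `|yD \ D| ≤ n |∂'_S D|`. -/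

open scoped Pointwise

section WordBall

variable {G : Type*} [Group G] {S : Set G}

lemma one_mem_wordBall (n : ℕ) : (1 : G) ∈ wordBall S n :=
  ⟨[], by simp, by simp, rfl⟩

lemma wordBall_mono {m n : ℕ} (h : m ≤ n) : wordBall S m ⊆ wordBall S n :=
  fun _ ⟨l, hl, hS, hx⟩ => ⟨l, hl.trans h, hS, hx⟩

lemma wordBall_zero : wordBall S 0 = {1} := by
  refine Set.Subset.antisymm ?_ (Set.singleton_subset_iff.2 (one_mem_wordBall 0))
  rintro x ⟨l, hl, -, rfl⟩
  simp [List.length_eq_zero_iff.1 (Nat.le_zero.1 hl)]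

lemma wordBall_succ_subset (n : ℕ) : wordBall S (n + 1) ⊆ wordBall S n ∪ S * wordBall S n := by
  rintro x ⟨_ | ⟨s, l⟩, hl, hS, rfl⟩
  · exact Or.inl (one_mem_wordBall n)
  · refine Or.inr (Set.mul_mem_mul (hS s List.mem_cons_self) ⟨l, ?_, ?_, rfl⟩)
    · simpa using hl
    · exact fun a ha => hS a (List.mem_cons_of_mem s ha)

lemma finite_wordBall (hS : S.Finite) (n : ℕ) : (wordBall S n).Finite := by
  induction n with
  | zero => simp [wordBall_zero]
  | succ n ih => exact (ih.union (hS.mul ih)).subset (wordBall_succ_subset n)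

lemma exists_mem_wordBall (hSsym : ∀ s ∈ S, s⁻¹ ∈ S) (hSgen : Subgroup.closure S = ⊤) (g : G) :
    ∃ n, g ∈ wordBall S n := by
  have hg : g ∈ Submonoid.closure (S ∪ S⁻¹) := by
    rw [← Subgroup.closure_toSubmonoid, hSgen]
    trivial
  obtain ⟨l, hl, rfl⟩ := Submonoid.exists_list_of_mem_closure hg
  refine ⟨l.length, l, le_rfl, fun s hs => ?_, rfl⟩
  rcases hl s hs with h | h
  · exact h
  · simpa using hSsym _ (Set.mem_inv.1 h)

lemma exists_finset_subset_wordBall (hSsym : ∀ s ∈ S, s⁻¹ ∈ S)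
    (hSgen : Subgroup.closure S = ⊤) (F : Finset G) : ∃ n, ↑F ⊆ wordBall S n := by
  choose radius h using exists_mem_wordBall hSsym hSgen
  exact ⟨F.sup radius, fun g hg => wordBall_mono (Finset.le_sup hg) (h g)⟩

lemma exists_finset_le_card {α : Type*} {t : ℝ} (ht : Finite α → t ≤ Nat.card α) :
    ∃ F : Finset α, t ≤ F.card := by
  cases finite_or_infinite α with
  | inl hfin =>
    have := Fintype.ofFinite α
    exact ⟨Finset.univ, by simpa [Finset.card_univ, Nat.card_eq_fintype_card] using ht hfin⟩
  | inr hinf =>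
    obtain ⟨F, hF⟩ := Infinite.exists_subset_card_eq α ⌈t⌉₊
    exact ⟨F, hF ▸ Nat.le_ceil t⟩

lemma le_growth_phiS (hS : S.Finite) (hSsym : ∀ s ∈ S, s⁻¹ ∈ S)
    (hSgen : Subgroup.closure S = ⊤) {t : ℝ} (ht : Finite G → t ≤ Nat.card G) :
    t ≤ growth S (phiS S t) := by
  apply Nat.sInf_mem (s := {n | t ≤ (growth S n : ℝ)})
  obtain ⟨F, hF⟩ := exists_finset_le_card ht
  obtain ⟨n, hn⟩ := exists_finset_subset_wordBall hSsym hSgen F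
  refine ⟨n, hF.trans ?_⟩
  rw [← Set.ncard_coe_finset]
  exact_mod_cast Set.ncard_le_ncard hn (finite_wordBall hS n)

end WordBall

section Boundary

variable {G : Type*} [Group G] {S D : Set G}

lemma finite_extBoundary (hS : S.Finite) (hD : D.Finite) : (extBoundary S D).Finite := by
  refine ((hS.image Inv.inv).mul hD).subset ?_
  rintro x ⟨-, s, hs, hsx⟩
  exact ⟨s⁻¹, Set.mem_image_of_mem _ hs, s * x, hsx, by group⟩

lemma smul_diff_subset_extBoundary (hSsym : ∀ s ∈ S, s⁻¹ ∈ S) {s : G} (hs : s ∈ S) :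
    s • D \ D ⊆ extBoundary S D := by
  rintro _ ⟨⟨x, hx, rfl⟩, hsx⟩
  exact ⟨hsx, s⁻¹, hSsym s hs, by simpa using hx⟩

lemma mul_smul_diff_subset (a b : G) (D : Set G) :
    (a * b) • D \ D ⊆ a • (b • D \ D) ∪ (a • D \ D) := by
  rintro _ ⟨⟨x, hx, rfl⟩, habx⟩
  by_cases hbx : b • x ∈ D
  · exact Or.inr ⟨⟨b • x, hbx, (mul_smul a b x).symm⟩, habx⟩
  · exact Or.inl ⟨b • x, ⟨⟨x, hx, rfl⟩, hbx⟩, (mul_smul a b x).symm⟩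

lemma ncard_mul_smul_diff_le (hD : D.Finite) (a b : G) :
    ((a * b) • D \ D).ncard ≤ (b • D \ D).ncard + (a • D \ D).ncard :=
  calc ((a * b) • D \ D).ncard
      ≤ (a • (b • D \ D) ∪ (a • D \ D)).ncard :=
        Set.ncard_le_ncard (mul_smul_diff_subset a b D)
          (((hD.smul_set.sdiff).smul_set).union hD.smul_set.sdiff)
    _ ≤ (a • (b • D \ D)).ncard + (a • D \ D).ncard := Set.ncard_union_le _ _
    _ = (b • D \ D).ncard + (a • D \ D).ncard := by rw [Set.ncard_smul_set]

lemma ncard_smul_diff_le_of_mem_wordBall (hS : S.Finite) (hSsym : ∀ s ∈ S, s⁻¹ ∈ S)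
    (hD : D.Finite) {n : ℕ} {y : G} (hy : y ∈ wordBall S n) :
    (y • D \ D).ncard ≤ n * (extBoundary S D).ncard := by
  induction n generalizing y with
  | zero =>
    obtain rfl : y = 1 := wordBall_zero.subset hy
    simp
  | succ n ih =>
    rcases wordBall_succ_subset n hy with hy | ⟨s, hs, y', hy', rfl⟩
    · exact (ih hy).trans (Nat.mul_le_mul_right _ n.le_succ)
    · calc ((s * y') • D \ D).ncard ≤ (y' • D \ D).ncard + (s • D \ D).ncard :=
            ncard_mul_smul_diff_le hD s y'
        _ ≤ n * (extBoundary S D).ncard + (extBoundary S D).ncard :=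
            Nat.add_le_add (ih hy') (Set.ncard_le_ncard (smul_diff_subset_extBoundary hSsym hs)
              (finite_extBoundary hS hD))
        _ = (n + 1) * (extBoundary S D).ncard := (Nat.succ_mul n _).symm

end Boundary

section Counting

variable {G : Type*} [Group G]

lemma sum_card_smul_inter_le [DecidableEq G] (B D : Finset G) :
    ∑ y ∈ B, (y • D ∩ D).card ≤ D.card * D.card := by
  calc ∑ y ∈ B, (y • D ∩ D).card
      = ∑ y ∈ B, (D.bipartiteAbove (fun y z => z ∈ y • D) y).card := by
        simp only [Finset.bipartiteAbove, Finset.filter_mem_eq_inter, Finset.inter_comm]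
    _ = ∑ z ∈ D, (B.bipartiteBelow (fun y z => z ∈ y • D) z).card :=
        Finset.sum_card_bipartiteAbove_eq_sum_card_bipartiteBelow _
    _ ≤ ∑ _z ∈ D, D.card := by
        refine Finset.sum_le_sum fun z _ => Finset.card_le_card_of_injOn (fun y => y⁻¹ * z) ?_ ?_
        · intro y hy
          exact Finset.inv_smul_mem_iff.2 (Finset.mem_filter.1 hy).2
        · intro a _ b _ hab
          simpa using hab
    _ = D.card * D.card := by rw [Finset.sum_const, smul_eq_mul]

lemma exists_mul_ncard_smul_inter_le {B D : Set G} (hB : B.Finite) (hD : D.Finite)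
    (hBne : B.Nonempty) {lam : ℝ} (hlam : 0 ≤ lam) (hBD : lam * D.ncard ≤ B.ncard) :
    ∃ y ∈ B, lam * (y • D ∩ D).ncard ≤ D.ncard := by
  classical
  obtain ⟨B, rfl⟩ := hB.exists_finset_coe
  obtain ⟨D, rfl⟩ := hD.exists_finset_coe
  simp only [Set.ncard_coe_finset, ← Finset.coe_smul_finset, ← Finset.coe_inter,
    Finset.mem_coe] at hBD ⊢
  refine Finset.exists_le_of_sum_le (Finset.coe_nonempty.1 hBne) ?_
  calc ∑ y ∈ B, lam * ((y • D ∩ D).card : ℝ)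
      ≤ lam * (D.card * D.card) := by
        rw [← Finset.mul_sum]
        exact mul_le_mul_of_nonneg_left (by exact_mod_cast sum_card_smul_inter_le B D) hlam
    _ ≤ B.card * D.card := by nlinarith [Nat.cast_nonneg (α := ℝ) D.card]
    _ = ∑ _y ∈ B, (D.card : ℝ) := by rw [Finset.sum_const, nsmul_eq_mul]

end Counting

theorem stmt_16_general {G : Type*} [Group G] (S : Set G) (hSfin : S.Finite)
    (hSsym : ∀ s ∈ S, s⁻¹ ∈ S) (hSgen : Subgroup.closure S = ⊤)
    (D : Set G) (hDfin : D.Finite)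
    (lam : ℝ) (hlam : 1 < lam)
    (hcard : Finite G → lam * (D.ncard : ℝ) ≤ (Nat.card G : ℝ)) :
    ((extBoundary S D).ncard : ℝ) ≥
      (1 - 1 / lam) * (D.ncard : ℝ) / (phiS S (lam * (D.ncard : ℝ)) : ℝ) := by
  set n := phiS S (lam * D.ncard)
  have hlam0 : 0 < lam := one_pos.trans hlam
  obtain ⟨y, hy, hyD⟩ := exists_mul_ncard_smul_inter_le (finite_wordBall hSfin n) hDfin
    ⟨1, one_mem_wordBall n⟩ hlam0.le (le_growth_phiS hSfin hSsym hSgen hcard)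
  have hsplit : ((y • D ∩ D).ncard : ℝ) + (y • D \ D).ncard = D.ncard := by
    rw [← Nat.cast_add, Set.ncard_inter_add_ncard_sdiff_eq_ncard _ _ hDfin.smul_set,
      Set.ncard_smul_set]
  have hmoved : (1 - 1 / lam) * D.ncard ≤ (y • D \ D).ncard := by
    have : ((y • D ∩ D).ncard : ℝ) ≤ D.ncard / lam := by rw [le_div_iff₀ hlam0]; linarith
    rw [sub_mul, one_mul, one_div_mul_eq_div]
    linarith
  refine div_le_of_le_mul₀ n.cast_nonneg (Nat.cast_nonneg _) ?_
  calc (1 - 1 / lam) * D.ncard ≤ (y • D \ D).ncard := hmoved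
    _ ≤ n * (extBoundary S D).ncard := by
      exact_mod_cast ncard_smul_diff_le_of_mem_wordBall hSfin hSsym hDfin hy
    _ = (extBoundary S D).ncard * n := mul_comm _ _

theorem stmt_16 {G : Type*} [Group G] (S : Set G) (hSfin : S.Finite)
    (hSsym : ∀ s ∈ S, s⁻¹ ∈ S) (hSgen : Subgroup.closure S = ⊤)
    (D : Set G) (hDfin : D.Finite) (hDne : D.Nonempty)
    (lam : ℝ) (hlam : 1 < lam)
    (hcard : Finite G → lam * (D.ncard : ℝ) ≤ (Nat.card G : ℝ)) :
    ((extBoundary S D).ncard : ℝ) ≥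
      (1 - 1 / lam) * (D.ncard : ℝ) / (phiS S (lam * (D.ncard : ℝ)) : ℝ) :=
  stmt_16_general S hSfin hSsym hSgen D hDfin lam hlam hcard
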